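/- The first Betti number of Tetra is 1: the ℚ-vector space ℚ ⊗_ℤ (abelianization of Γ_T) is one-dimensional. -/

import Mathlib

noncomputable section

/-- Points of `ℝ³`, written as `(x, y, z)`. -/
abbrev R3 : Type := ℝ × ℝ × ℝ

/-- The translation `T_w : x ↦ x + w` of `ℝ³`, as a bijection (it is an isometry). -/
def transl (w : R3) : Equiv.Perm R3 := Equiv.addRight w

/-- The quarter-turn screw motion `τ(x,y,z) = (−y, x, z+1/2)`, as a bijection
(it is an isometry). -/
def tauE : Equiv.Perm R3 where
  toFun p := (-p.2.1, p.1, p.2.2 + 1/2)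
  invFun p := (p.2.1, -p.1, p.2.2 - 1/2)
  left_inv p := by obtain ⟨x, y, z⟩ := p; simp
  right_inv p := by obtain ⟨x, y, z⟩ := p; simp

/-- The half-turn screw motion `ρ_x(x,y,z) = (x+1/2, −y, −z)`, as a bijection
(it is an isometry). -/
def rhoxE : Equiv.Perm R3 where
  toFun p := (p.1 + 1/2, -p.2.1, -p.2.2)
  invFun p := (p.1 - 1/2, -p.2.1, -p.2.2)
  left_inv p := by obtain ⟨x, y, z⟩ := p; simp
  right_inv p := by obtain ⟨x, y, z⟩ := p; simp

/-- The half-turn screw motion `ρ_y(x,y,z) = (−x, y+1/2, 1−z)`, as a bijection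
(it is an isometry). -/
def rhoyE : Equiv.Perm R3 where
  toFun p := (-p.1, p.2.1 + 1/2, 1 - p.2.2)
  invFun p := (-p.1, p.2.1 - 1/2, 1 - p.2.2)
  left_inv p := by obtain ⟨x, y, z⟩ := p; simp
  right_inv p := by obtain ⟨x, y, z⟩ := p; simp

/-- `Γ_T`, the covering group of the tetracosm Tetra: the group generated by the
translations `T_{(1,0,0)}, T_{(0,1,0)}, T_{(0,0,2)}` and `τ`. -/
def GammaT : Subgroup (Equiv.Perm R3) :=
  Subgroup.closure {transl (1, 0, 0), transl (0, 1, 0), transl (0, 0, 2), tauE}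

/-- `Γ_D`, the covering group of the didicosm Didi: the group generated by the
translations `T_{(1,0,0)}, T_{(0,1,0)}, T_{(0,0,2)}` and `ρ_x`, `ρ_y`. -/
def GammaD : Subgroup (Equiv.Perm R3) :=
  Subgroup.closure {transl (1, 0, 0), transl (0, 1, 0), transl (0, 0, 2), rhoxE, rhoyE}

end

open scoped TensorProduct

/-!
Every generator of `Γ_T` moves the third coordinate by a constant, so `g ↦ (g 0).2.2` is a
homomorphism `Γ_T → ℝ`; it sends `τ` to `1/2`, hence the class of `τ` in the abelianization
has infinite order. Conjugation by `τ` sends `T_{(1,0,0)}` to `T_{(0,1,0)}` and `T_{(0,1,0)}` to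
`T_{(1,0,0)}⁻¹`, so both translations become `2`-torsion, while `τ⁴ = T_{(0,0,2)}`. Thus the
abelianization is torsion modulo the class of `τ` and has `ℤ`-rank `1`, which is the
`ℚ`-dimension of its base change to `ℚ`.
-/

section
variable {A : Type*} [AddCommGroup A]

theorem rank_int_eq_one_of_isAddTorsion_quotient {x : A} (hx : ¬IsOfFinAddOrder x)
    (htors : IsAddTorsion (A ⧸ ℤ ∙ x)) : Module.rank ℤ A = 1 := by
  have hspan : Module.rank ℤ (ℤ ∙ x) = 1 := by
    have hinj : Function.Injective (LinearMap.toSpanSingleton ℤ A x) :=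
      injective_zsmul_iff_not_isOfFinAddOrder.mpr hx
    have := lift_rank_range_of_injective _ hinj
    rwa [← LinearMap.span_singleton_eq_range, Module.rank_self, Cardinal.lift_one,
      Cardinal.lift_eq_one] at this
  have hquot : Module.rank ℤ (A ⧸ ℤ ∙ x) = 0 := by
    refine rank_eq_zero_iff.mpr fun q => ?_
    obtain ⟨n, hn, hnq⟩ := isOfFinAddOrder_iff_nsmul_eq_zero.mp (htors q)
    exact ⟨n, by exact_mod_cast hn.ne', by rwa [natCast_zsmul]⟩
  rw [← rank_quotient_add_rank_of_isDomain (ℤ ∙ x), hquot, hspan, zero_add]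

theorem rank_rat_tensorProduct_eq_one_of_isAddTorsion_quotient {x : A} (hx : ¬IsOfFinAddOrder x)
    (htors : IsAddTorsion (A ⧸ ℤ ∙ x)) : Module.rank ℚ (ℚ ⊗[ℤ] A) = 1 := by
  rw [(TensorProduct.isBaseChange ℤ A ℚ).rank_eq]
  exact rank_int_eq_one_of_isAddTorsion_quotient hx htors

end

def zShiftSubgroup : Subgroup (Equiv.Perm R3) where
  carrier := {g | ∃ c : ℝ, ∀ p : R3, (g p).2.2 = p.2.2 + c}
  one_mem' := ⟨0, fun p => (add_zero _).symm⟩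
  mul_mem' := by
    rintro g h ⟨c, hc⟩ ⟨d, hd⟩
    exact ⟨d + c, fun p => by rw [Equiv.Perm.mul_apply, hc, hd, add_assoc]⟩
  inv_mem' := by
    rintro g ⟨c, hc⟩
    refine ⟨-c, fun p => ?_⟩
    have := hc (g⁻¹ p)
    simp only [Equiv.Perm.coe_inv, Equiv.apply_symm_apply] at this ⊢
    linarith

theorem zShiftSubgroup.apply_snd_snd {g : Equiv.Perm R3} (hg : g ∈ zShiftSubgroup) (p : R3) :
    (g p).2.2 = p.2.2 + (g 0).2.2 := by
  obtain ⟨c, hc⟩ := hg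
  rw [hc, hc 0, Prod.snd_zero, Prod.snd_zero, zero_add]

def zShift : zShiftSubgroup →* Multiplicative ℝ where
  toFun g := Multiplicative.ofAdd (g.1 0).2.2
  map_one' := rfl
  map_mul' g h := by
    rw [← ofAdd_add, Subgroup.coe_mul, Equiv.Perm.mul_apply,
      zShiftSubgroup.apply_snd_snd g.2, add_comm]

theorem gammaT_le_zShiftSubgroup : GammaT ≤ zShiftSubgroup := by
  refine Subgroup.closure_le _ |>.mpr ?_
  rintro g (rfl | rfl | rfl | rfl)
  · exact ⟨0, fun p => rfl⟩
  · exact ⟨0, fun p => rfl⟩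
  · exact ⟨2, fun p => rfl⟩
  · exact ⟨1/2, fun p => rfl⟩

namespace GammaT

noncomputable def transX : GammaT := ⟨transl (1, 0, 0), Subgroup.subset_closure (by simp)⟩
noncomputable def transY : GammaT := ⟨transl (0, 1, 0), Subgroup.subset_closure (by simp)⟩
noncomputable def transZ : GammaT := ⟨transl (0, 0, 2), Subgroup.subset_closure (by simp)⟩
noncomputable def tau : GammaT := ⟨tauE, Subgroup.subset_closure (by simp)⟩

theorem closure_generators : Subgroup.closure {transX, transY, transZ, tau} = ⊤ := by
  refine Eq.trans ?_ (Subgroup.closure_closure_coe_preimage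
    (k := {transl (1, 0, 0), transl (0, 1, 0), transl (0, 0, 2), tauE}))
  congr 1
  ext g
  simp only [transX, transY, transZ, tau, Set.mem_insert_iff, Subtype.ext_iff,
    Set.mem_singleton_iff]
  rfl

theorem tau_mul_transX_mul_inv : tau * transX * tau⁻¹ = transY := by
  refine Subtype.ext <| Equiv.ext fun ⟨x, y, z⟩ => ?_
  simp [transX, transY, tau, transl, tauE]

theorem tau_mul_transY_mul_inv : tau * transY * tau⁻¹ = transX⁻¹ := by
  refine Subtype.ext <| Equiv.ext fun ⟨x, y, z⟩ => ?_
  norm_num [transX, transY, tau, transl, tauE, add_comm]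

theorem tau_pow_four : tau ^ 4 = transZ := by
  refine Subtype.ext <| Equiv.ext fun ⟨x, y, z⟩ => ?_
  norm_num [transZ, tau, transl, tauE, pow_succ, add_assoc]

def ab (g : GammaT) : Additive (Abelianization GammaT) := Additive.ofMul (Abelianization.of g)

@[simp] theorem ab_one : ab 1 = 0 := by simp [ab]
@[simp] theorem ab_mul (g h : GammaT) : ab (g * h) = ab g + ab h := by simp [ab]
@[simp] theorem ab_inv (g : GammaT) : ab g⁻¹ = -ab g := by simp [ab]
@[simp] theorem ab_pow (g : GammaT) (n : ℕ) : ab (g ^ n) = n • ab g := by simp [ab]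

theorem ab_transY : ab transY = ab transX := by
  simp [← tau_mul_transX_mul_inv]

theorem two_nsmul_ab_transX : 2 • ab transX = 0 := by
  have h : ab transX = -ab transX := by
    simpa [ab_transY] using congrArg ab tau_mul_transY_mul_inv
  rw [two_nsmul]
  exact neg_eq_iff_add_eq_zero.mp h.symm

theorem ab_transZ : ab transZ = 4 • ab tau := by
  simp [← tau_pow_four]

theorem ab_surjective : Function.Surjective ab :=
  fun a => QuotientGroup.mk_surjective (Additive.toMul a)

theorem isAddTorsion_quotient_span_ab_tau :
    IsAddTorsion (Additive (Abelianization GammaT) ⧸ ℤ ∙ ab tau) := by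
  set π := (ℤ ∙ ab tau).mkQ
  have hπ {a} (ha : a ∈ ℤ ∙ ab tau) : IsOfFinAddOrder (π a) := by
    rw [Submodule.mkQ_apply, (Submodule.Quotient.mk_eq_zero _).mpr ha]
    exact .zero
  have htwo {a} (ha : 2 • a = 0) : IsOfFinAddOrder (π a) :=
    π.toAddMonoidHom.isOfFinAddOrder (isOfFinAddOrder_iff_nsmul_eq_zero.mpr ⟨2, two_pos, ha⟩)
  have key (g : GammaT) : IsOfFinAddOrder (π (ab g)) := by
    induction (closure_generators ▸ Subgroup.mem_top g : g ∈ Subgroup.closure _)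
      using Subgroup.closure_induction with
    | mem g hg =>
      rcases hg with rfl | rfl | rfl | rfl
      · exact htwo two_nsmul_ab_transX
      · exact htwo (ab_transY ▸ two_nsmul_ab_transX)
      · exact ab_transZ ▸
          hπ (Submodule.smul_of_tower_mem _ 4 (Submodule.mem_span_singleton_self _))
      · exact hπ (Submodule.mem_span_singleton_self _)
    | one => simp
    | mul g h _ _ hg hh => simpa using hg.add hh
    | inv g _ hg => simpa using hg.neg
  intro q
  obtain ⟨a, rfl⟩ := Submodule.mkQ_surjective _ q
  obtain ⟨g, rfl⟩ := ab_surjective a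
  exact key g

theorem not_isOfFinAddOrder_ab_tau : ¬IsOfFinAddOrder (ab tau) := by
  let φ : Additive (Abelianization GammaT) →+ ℝ := MonoidHom.toAdditiveLeft
    (Abelianization.lift (zShift.comp (Subgroup.inclusion gammaT_le_zShiftSubgroup)))
  have hφ : φ (ab tau) = 1 / 2 := by
    show (tauE 0).2.2 = 1 / 2
    norm_num [tauE]
  intro h
  have := (φ.isOfFinAddOrder h).eq_zero'
  norm_num [hφ] at this

end GammaT

/-- the first Betti number of Tetra is 1: the ℚ-vector space
`ℚ ⊗_ℤ (abelianization of Γ_T)` is one-dimensional. -/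
theorem betti_one_tetra :
    Module.rank ℚ (ℚ ⊗[ℤ] Additive (Abelianization ↥GammaT)) = 1 :=
  rank_rat_tensorProduct_eq_one_of_isAddTorsion_quotient GammaT.not_isOfFinAddOrder_ab_tau
    GammaT.isAddTorsion_quotient_span_ab_tau
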